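/- Let S be a linear subspace of ℝⁿ × ℝᵐ and let (x,y) ∈ S. Then ‖y‖² (‖x‖² − ‖π_{S^⊥}(x,0)‖²) ≥ ‖x‖² ‖π_{S^⊥}(0,y)‖². -/

import Mathlib

/-!
Write `a = (x,0)`, `b = (0,y)` and `P` for the orthogonal projection onto `S^⊥`. Since
`a + b ∈ S`, the vector `v = P a` satisfies `P b = -v`, hence `‖v‖² = ⟪a, v⟫ = -⟪b, v⟫`.
Testing `v` against `‖b‖² a - ‖a‖² b` with Cauchy–Schwarz gives
`‖v‖² (‖a‖² + ‖b‖²) ≤ ‖a‖² ‖b‖²`, which is the claim after expanding.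
-/

/-- The Euclidean space `ℝⁿ × ℝᵐ` with the (L²) product inner product. -/
noncomputable abbrev E2 (n m : ℕ) :=
  WithLp 2 (EuclideanSpace ℝ (Fin n) × EuclideanSpace ℝ (Fin m))

/-- The point `(x, y)` of `ℝⁿ × ℝᵐ`. -/
noncomputable def mk2 {n m : ℕ} (x : EuclideanSpace ℝ (Fin n))
    (y : EuclideanSpace ℝ (Fin m)) : E2 n m :=
  (WithLp.linearEquiv 2 ℝ _).symm (x, y)

/-- The orthogonal projection of `E` onto the subspace `V`, as a map `E → E`. -/
noncomputable def proj {E : Type*} [NormedAddCommGroup E] [InnerProductSpace ℝ E]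
    (V : Submodule ℝ E) [Submodule.HasOrthogonalProjection V] : E →L[ℝ] E :=
  V.subtypeL.comp (Submodule.orthogonalProjectionOnto V)

open RealInnerProductSpace

section InnerProductSpace

variable {E : Type*} [NormedAddCommGroup E] [InnerProductSpace ℝ E]

theorem norm_sq_mul_add_le_of_inner_eq {a b v : E} (hab : ⟪a, b⟫ = 0)
    (ha : ⟪a, v⟫ = ‖v‖ ^ 2) (hb : ⟪b, v⟫ = -‖v‖ ^ 2) :
    ‖v‖ ^ 2 * (‖a‖ ^ 2 + ‖b‖ ^ 2) ≤ ‖a‖ ^ 2 * ‖b‖ ^ 2 := by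
  set w := ‖b‖ ^ 2 • a - ‖a‖ ^ 2 • b
  have hwv : ⟪w, v⟫ = ‖v‖ ^ 2 * (‖a‖ ^ 2 + ‖b‖ ^ 2) := by
    simp only [w, inner_sub_left, real_inner_smul_left, ha, hb]; ring
  have hww : ⟪w, w⟫ = ‖a‖ ^ 2 * ‖b‖ ^ 2 * (‖a‖ ^ 2 + ‖b‖ ^ 2) := by
    simp only [w, inner_sub_left, inner_sub_right, real_inner_smul_left, real_inner_smul_right,
      hab, real_inner_comm a b]
    rw [real_inner_self_eq_norm_sq, real_inner_self_eq_norm_sq]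
    ring
  have hcs := real_inner_mul_inner_self_le w v
  rw [hwv, hww, real_inner_self_eq_norm_sq] at hcs
  rcases (mul_nonneg (sq_nonneg ‖v‖) (by positivity : 0 ≤ ‖a‖ ^ 2 + ‖b‖ ^ 2)).eq_or_lt with h | h
  · rw [← h]; positivity
  · -- divide Cauchy–Schwarz by `‖v‖² (‖a‖² + ‖b‖²)`
    nlinarith

theorem real_inner_starProjection_self (K : Submodule ℝ E) [K.HasOrthogonalProjection] (u : E) :
    ⟪u, K.starProjection u⟫ = ‖K.starProjection u‖ ^ 2 := by
  calc ⟪u, K.starProjection u⟫ = ⟪u, K.starProjection (K.starProjection u)⟫ := by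
        rw [K.starProjection_eq_self_iff.mpr (K.starProjection_apply_mem u)]
    _ = ‖K.starProjection u‖ ^ 2 := by
        rw [← K.inner_starProjection_left_eq_right, real_inner_self_eq_norm_sq]

theorem norm_sq_mul_norm_sq_starProjection_le (K : Submodule ℝ E) [K.HasOrthogonalProjection]
    {a b : E} (hab : ⟪a, b⟫ = 0) (hsum : a + b ∈ Kᗮ) :
    ‖a‖ ^ 2 * ‖K.starProjection b‖ ^ 2 ≤ ‖b‖ ^ 2 * (‖a‖ ^ 2 - ‖K.starProjection a‖ ^ 2) := by
  set v := K.starProjection a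
  have hb : K.starProjection b = -v := by
    rw [eq_neg_iff_add_eq_zero, add_comm, ← map_add, K.starProjection_apply_eq_zero_iff]
    exact hsum
  have hav : ⟪a, v⟫ = ‖v‖ ^ 2 := real_inner_starProjection_self K a
  have hbv : ⟪b, v⟫ = -‖v‖ ^ 2 := by
    have := real_inner_starProjection_self K b
    rw [hb, inner_neg_right, norm_neg] at this
    linarith
  have key := norm_sq_mul_add_le_of_inner_eq hab hav hbv
  rw [hb, norm_neg]
  linarith

end InnerProductSpace

theorem mk2_eq_toLp {n m : ℕ} (x : EuclideanSpace ℝ (Fin n)) (y : EuclideanSpace ℝ (Fin m)) :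
    mk2 x y = WithLp.toLp 2 (x, y) := rfl

/-- If `S` is a linear subspace of `ℝⁿ × ℝᵐ` and `(x,y) ∈ S`, then
`‖y‖² (‖x‖² − ‖π_{S^⊥}(x,0)‖²) ≥ ‖x‖² ‖π_{S^⊥}(0,y)‖²`. -/
theorem stmt4 (n m : ℕ) (S : Submodule ℝ (E2 n m))
    (x : EuclideanSpace ℝ (Fin n)) (y : EuclideanSpace ℝ (Fin m))
    (hxy : mk2 x y ∈ S) :
    ‖x‖ ^ 2 * ‖proj Sᗮ (mk2 0 y)‖ ^ 2 ≤ ‖y‖ ^ 2 * (‖x‖ ^ 2 - ‖proj Sᗮ (mk2 x 0)‖ ^ 2) := by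
  have horth : ⟪mk2 x 0, mk2 0 y⟫ = 0 := by simp [mk2_eq_toLp]
  have hsum : mk2 x 0 + mk2 0 y ∈ Sᗮᗮ := by
    rw [mk2_eq_toLp, mk2_eq_toLp, ← WithLp.toLp_add, Prod.mk_add_mk, add_zero, zero_add]
    exact S.le_orthogonal_orthogonal hxy
  have hx : ‖(mk2 x 0 : E2 n m)‖ = ‖x‖ := WithLp.norm_toLp_fst 2 _ _ x
  have hy : ‖(mk2 0 y : E2 n m)‖ = ‖y‖ := WithLp.norm_toLp_snd 2 _ _ y
  have key := norm_sq_mul_norm_sq_starProjection_le Sᗮ horth hsum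
  rwa [hx, hy] at key
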